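/- Let |ψ⟩ be an n-qubit stabilizer state with stabilizer group S, and let P = ∏_{j=1}^n P_j with each P_j ∈ {X_j, Y_j, Z_j} be a full-support Pauli string. Let P∩S denote the set of elements of S contained in P (obtainable by replacing some tensor factors of P with identity, up to sign). Suppose measuring each P_j yields outcome string y ∈ {0,1}^n. Then Pr[y] = |P∩S|/2^n if for every S = (−1)^{λ_S} ∏_j P_j^{f_j^{(S)}} ∈ P∩S one has f^{(S)}·y = λ_S mod 2, and Pr[y] = 0 otherwise. -/

import Mathlib

open Matrix
open scoped Classical

/-- Single-qubit Pauli `X`. -/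
noncomputable def sigmaX : Matrix (ZMod 2) (ZMod 2) ℂ :=
  Matrix.of fun s t => if s = t + 1 then 1 else 0

/-- Single-qubit Pauli `Y`. -/
noncomputable def sigmaY : Matrix (ZMod 2) (ZMod 2) ℂ :=
  Matrix.of fun s t => if s = t + 1 then Complex.I * (-1 : ℂ) ^ t.val else 0

/-- Single-qubit Pauli `Z`. -/
noncomputable def sigmaZ : Matrix (ZMod 2) (ZMod 2) ℂ :=
  Matrix.diagonal fun t => (-1 : ℂ) ^ t.val

/-- The `n`-qubit Pauli operator `X^a Z^b` (no phase). -/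
noncomputable def PauliMat {ι : Type*} [Fintype ι] [DecidableEq ι] (a b : ι → ZMod 2) :
    Matrix (ι → ZMod 2) (ι → ZMod 2) ℂ :=
  Matrix.of fun s t => if s = t + a then (-1 : ℂ) ^ (∑ j, (b j * t j).val) else 0

/-!
The normalised sum `2⁻ⁿ ∑_{Q ∈ S} Q` of the stabilizer group is a Hermitian idempotent of trace
one fixing `ψ`, hence it is the rank-one projector `|ψ⟩⟨ψ|`. The outcome projector expands as
`2⁻ⁿ ∑_f (-1)^{f·y} P^f` with `P^f = ∏_j P_j^{f_j}`, and by trace orthogonality of Pauli operators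
`tr (P^f Q)` for `Q ∈ S` vanishes unless `Q = (-1)^λ P^f`. Hence `Pr[y]` is `2⁻ⁿ` times the sum of
the character `(f, λ) ↦ (-1)^{f·y + λ}` over the group of pairs with `(-1)^λ P^f ∈ S`, which is in
bijection with `P ∩ S`; a character sum over a finite group is its order or zero according as the
character is trivial or not.
-/

lemma zmod_two_eq_zero_or_eq_one (x : ZMod 2) : x = 0 ∨ x = 1 := by
  revert x; decide

lemma forall_zmod_two {p : ZMod 2 → Prop} : (∀ x, p x) ↔ p 0 ∧ p 1 :=
  Fin.forall_fin_two

lemma sum_zmod_two {M : Type*} [AddCommMonoid M] (f : ZMod 2 → M) : ∑ x, f x = f 0 + f 1 :=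
  Fin.sum_univ_two f

lemma pow_val_mul_pow_val {M : Type*} [Monoid M] {a : M} (ha : a * a = 1) (x y : ZMod 2) :
    a ^ x.val * a ^ y.val = a ^ (x + y).val := by
  rw [← pow_add, pow_eq_pow_mod _ (by rw [sq, ha] : a ^ 2 = 1), ZMod.val_add]

lemma AddChar.sum_finset_eq_ite {G R : Type*} [AddGroup G] [CommRing R] [IsDomain R]
    (ψ : AddChar G R) {H : Finset G} (hadd : ∀ x ∈ H, ∀ y ∈ H, x + y ∈ H)
    (hneg : ∀ x ∈ H, -x ∈ H) :
    ∑ x ∈ H, ψ x = if ∀ x ∈ H, ψ x = 1 then (H.card : R) else 0 := by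
  split_ifs with h
  · rw [Finset.sum_congr rfl h, Finset.sum_const, nsmul_one]
  · obtain ⟨x₀, hx₀, hψ⟩ := not_forall₂.mp h
    refine eq_zero_of_mul_eq_self_left hψ ?_
    rw [Finset.mul_sum]
    exact Finset.sum_nbij' (x₀ + ·) (-x₀ + ·) (fun x hx => hadd _ hx₀ _ hx)
      (fun x hx => hadd _ (hneg _ hx₀) _ hx) (fun x _ => neg_add_cancel_left x₀ x)
      (fun x _ => add_neg_cancel_left x₀ x) (fun x _ => (AddChar.map_add_eq_mul ψ x₀ x).symm)

open scoped ComplexOrder in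
theorem eq_vecMulVec_of_isHermitian_of_isIdempotentElem {𝕜 m : Type*} [RCLike 𝕜] [Fintype m]
    {A : Matrix m m 𝕜} (hA : A.IsHermitian) (hA2 : IsIdempotentElem A) (htr : A.trace = 1)
    {ψ : m → 𝕜} (hψ : A *ᵥ ψ = ψ) (hnorm : star ψ ⬝ᵥ ψ = 1) :
    A = vecMulVec ψ (star ψ) := by
  set ρ := vecMulVec ψ (star ψ)
  have hρ : ρᴴ = ρ := by rw [conjTranspose_vecMulVec, star_star]
  have hAρ : A * ρ = ρ := by rw [mul_vecMulVec, hψ]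
  have hρA : ρ * A = ρ := by
    simpa only [conjTranspose_mul, hρ, hA.eq] using congrArg conjTranspose hAρ
  have hρρ : ρ * ρ = ρ := by rw [vecMulVec_mul_vecMulVec, hnorm, one_smul]
  have hK : (A - ρ)ᴴ * (A - ρ) = A - ρ := by
    rw [conjTranspose_sub, hA.eq, hρ, sub_mul, mul_sub, mul_sub, hA2.eq, hAρ, hρA, hρρ]
    abel
  have htrK : (A - ρ).trace = 0 := by
    rw [trace_sub, htr, trace_vecMulVec, dotProduct_comm, hnorm, sub_self]
  rw [← sub_eq_zero, ← trace_conjTranspose_mul_self_eq_zero_iff, hK, htrK]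

noncomputable def signChar : AddChar (ZMod 2) ℂ :=
  AddChar.zmodChar 2 (by norm_num : (-1 : ℂ) ^ 2 = 1)

lemma signChar_apply (x : ZMod 2) : signChar x = (-1) ^ x.val :=
  AddChar.zmodChar_apply _ x

@[simp] lemma signChar_one : signChar 1 = -1 := by
  rw [signChar_apply, ZMod.val_one, pow_one]

@[simp] lemma signChar_eq_one_iff {x : ZMod 2} : signChar x = 1 ↔ x = 0 := by
  obtain rfl | rfl := zmod_two_eq_zero_or_eq_one x
  · simp
  · norm_num

@[simp] lemma signChar_mul_self (x : ZMod 2) : signChar x * signChar x = 1 := by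
  rw [← AddChar.map_add_eq_mul, ZModModule.add_self, AddChar.map_zero_eq_one]

@[simp] lemma signChar_ne_zero (x : ZMod 2) : signChar x ≠ 0 :=
  left_ne_zero_of_mul_eq_one (signChar_mul_self x)

@[simp] lemma star_signChar (x : ZMod 2) : star (signChar x) = signChar x := by
  simp [signChar_apply]

lemma signChar_injective : Function.Injective signChar := by
  intro x y h
  rw [← sub_eq_zero, ← signChar_eq_one_iff, AddChar.map_sub_eq_div, h,
    div_self (signChar_ne_zero y)]

lemma neg_one_pow_sum_val {ι : Type*} [Fintype ι] (g : ι → ZMod 2) :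
    (-1 : ℂ) ^ (∑ j, (g j).val) = signChar (∑ j, g j) := by
  have h : ((∑ j, (g j).val : ℕ) : ZMod 2) = ∑ j, g j := by simp [ZMod.natCast_val]
  rw [signChar_apply, ← h, ZMod.val_natCast, ← neg_one_pow_eq_pow_mod_two]

lemma prod_signChar {ι : Type*} [Fintype ι] (g : ι → ZMod 2) :
    ∏ j, signChar (g j) = signChar (∑ j, g j) := by
  simp only [signChar_apply, Finset.prod_pow_eq_pow_sum, neg_one_pow_sum_val]

section piKron

variable {ι m R : Type*} [Fintype ι] [CommSemiring R]

def piKron (M : ι → Matrix m m R) : Matrix (ι → m) (ι → m) R :=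
  of fun s t => ∏ j, M j (s j) (t j)

@[simp] lemma piKron_apply (M : ι → Matrix m m R) (s t : ι → m) :
    piKron M s t = ∏ j, M j (s j) (t j) := rfl

lemma piKron_mul [DecidableEq ι] [Fintype m] (M N : ι → Matrix m m R) :
    piKron M * piKron N = piKron fun j => M j * N j := by
  ext s t
  simp only [mul_apply, piKron_apply, Finset.prod_univ_sum, Fintype.piFinset_univ,
    Finset.prod_mul_distrib]

lemma piKron_smul (c : ι → R) (M : ι → Matrix m m R) :
    piKron (fun j => c j • M j) = (∏ j, c j) • piKron M := by
  ext s t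
  simp [Finset.prod_mul_distrib]

lemma piKron_one [DecidableEq m] : piKron (fun _ : ι => (1 : Matrix m m R)) = 1 := by
  ext s t
  by_cases h : s = t
  · subst h
    simp
  · obtain ⟨j, hj⟩ := Function.ne_iff.mp h
    rw [piKron_apply, one_apply_ne h]
    exact Finset.prod_eq_zero (Finset.mem_univ j) (one_apply_ne hj)

lemma trace_piKron [DecidableEq ι] [Fintype m] (M : ι → Matrix m m R) :
    trace (piKron M) = ∏ j, trace (M j) := by
  simp only [trace, diag, piKron_apply, Finset.prod_univ_sum, Fintype.piFinset_univ]

lemma piKron_sum [DecidableEq ι] {κ : Type*} [Fintype κ] (G : ι → κ → Matrix m m R) :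
    piKron (fun j => ∑ k, G j k) = ∑ f : ι → κ, piKron fun j => G j (f j) := by
  ext s t
  simp only [piKron_apply, Matrix.sum_apply, Finset.prod_univ_sum, Fintype.piFinset_univ]

end piKron

noncomputable def qubitPauli (a b : ZMod 2) : Matrix (ZMod 2) (ZMod 2) ℂ :=
  of fun s t => if s = t + a then signChar (b * t) else 0

lemma qubitPauli_zero_zero : qubitPauli 0 0 = 1 := by
  ext s t
  simp [qubitPauli, one_apply]

lemma trace_qubitPauli_eq_zero {a b : ZMod 2} (h : (a, b) ≠ 0) : trace (qubitPauli a b) = 0 := by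
  revert a b
  simp only [trace, diag, sum_zmod_two, ne_eq, Prod.mk_eq_zero, not_and_or, forall_zmod_two]
  simp [qubitPauli]

def IsSigma (M : Matrix (ZMod 2) (ZMod 2) ℂ) : Prop :=
  M = sigmaX ∨ M = sigmaY ∨ M = sigmaZ

namespace IsSigma

variable {M : Matrix (ZMod 2) (ZMod 2) ℂ}

lemma mul_self (hM : IsSigma M) : M * M = 1 := by
  ext s t
  revert s t
  rcases hM with rfl | rfl | rfl <;>
    simp [forall_zmod_two, mul_apply, sum_zmod_two, sigmaX, sigmaY, sigmaZ, one_apply,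
      ZModModule.add_self, ZMod.val_one]

lemma trace_eq_zero (hM : IsSigma M) : trace M = 0 := by
  rcases hM with rfl | rfl | rfl <;>
    simp [trace, sum_zmod_two, sigmaX, sigmaY, sigmaZ, ZMod.val_one]

lemma exists_eq_smul_qubitPauli (hM : IsSigma M) :
    ∃ (c : ℂ) (a b : ZMod 2), M = c • qubitPauli a b := by
  rcases hM with rfl | rfl | rfl
  · exact ⟨1, 1, 0, by ext s t; simp [sigmaX, qubitPauli]⟩
  · exact ⟨Complex.I, 1, 1, by ext s t; simp [sigmaY, qubitPauli, signChar_apply]⟩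
  · refine ⟨1, 0, 1, ?_⟩
    ext s t
    by_cases h : s = t <;> simp [sigmaZ, qubitPauli, diagonal, signChar_apply, h]

end IsSigma

section PauliMat

variable {ι : Type*} [Fintype ι] [DecidableEq ι]

lemma pauliMat_apply (a b s t : ι → ZMod 2) :
    PauliMat a b s t = if s = t + a then signChar (b ⬝ᵥ t) else 0 := by
  simp only [PauliMat, of_apply, neg_one_pow_sum_val, dotProduct]

lemma pauliMat_eq_piKron (a b : ι → ZMod 2) :
    PauliMat a b = piKron fun j => qubitPauli (a j) (b j) := by
  ext s t
  simp only [pauliMat_apply, piKron_apply, qubitPauli, of_apply]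
  by_cases h : s = t + a
  · simp [h, prod_signChar, dotProduct]
  · obtain ⟨j, hj⟩ := Function.ne_iff.mp h
    rw [if_neg h, Finset.prod_eq_zero (Finset.mem_univ j) (if_neg hj)]

lemma pauliMat_zero : PauliMat (0 : ι → ZMod 2) 0 = 1 := by
  ext s t
  simp [pauliMat_apply, one_apply]

lemma pauliMat_mul (a b c d : ι → ZMod 2) :
    PauliMat a b * PauliMat c d = signChar (b ⬝ᵥ c) • PauliMat (a + c) (b + d) := by
  ext s t
  rw [mul_apply, Finset.sum_eq_single (t + c)]
  · have hidx : t + c + a = t + (a + c) := by abel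
    simp only [pauliMat_apply, Matrix.smul_apply, smul_eq_mul, hidx, ite_mul,
      mul_ite, zero_mul, mul_zero, dotProduct_add, add_dotProduct, AddChar.map_add_eq_mul]
    split_ifs <;> ring
  · intro u _ hu
    simp [pauliMat_apply, hu]
  · simp

lemma conjTranspose_pauliMat (a b : ι → ZMod 2) :
    (PauliMat a b)ᴴ = signChar (b ⬝ᵥ a) • PauliMat a b := by
  ext s t
  by_cases h : s = t + a
  · subst h
    simp [pauliMat_apply, add_assoc, ZModModule.add_self, dotProduct_add, AddChar.map_add_eq_mul,
      mul_comm]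
  · have ht : t ≠ s + a := fun ht => h (by rw [ht, add_assoc, ZModModule.add_self, add_zero])
    simp [pauliMat_apply, h, ht]

lemma conjTranspose_pauliMat_mul_self (a b : ι → ZMod 2) :
    (PauliMat a b)ᴴ * PauliMat a b = 1 := by
  rw [conjTranspose_pauliMat, smul_mul_assoc, pauliMat_mul, smul_smul, signChar_mul_self,
    ZModModule.add_self, ZModModule.add_self, pauliMat_zero, one_smul]

lemma trace_pauliMat_eq_zero {a b : ι → ZMod 2} (h : (a, b) ≠ 0) :
    trace (PauliMat a b) = 0 := by
  obtain ⟨j, hj⟩ : ∃ j, (a j, b j) ≠ 0 := by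
    by_contra! h'
    simp only [Prod.mk_eq_zero] at h'
    exact h (Prod.ext (funext fun j => (h' j).1) (funext fun j => (h' j).2))
  rw [pauliMat_eq_piKron, trace_piKron]
  exact Finset.prod_eq_zero (Finset.mem_univ j) (trace_qubitPauli_eq_zero hj)

end PauliMat

structure IsStabilizerGroup {ι : Type*} [Fintype ι] [DecidableEq ι]
    (S : Finset (Matrix (ι → ZMod 2) (ι → ZMod 2) ℂ)) : Prop where
  pauli : ∀ P ∈ S, ∃ (μ : ℂ) (a b : ι → ZMod 2),
    (μ = 1 ∨ μ = -1 ∨ μ = Complex.I ∨ μ = -Complex.I) ∧ P = μ • PauliMat a b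
  mul_mem : ∀ P ∈ S, ∀ Q ∈ S, P * Q ∈ S
  neg_one_not_mem : (-1 : ℂ) • (1 : Matrix (ι → ZMod 2) (ι → ZMod 2) ℂ) ∉ S

namespace IsStabilizerGroup

variable {ι : Type*} [Fintype ι] [DecidableEq ι] {S : Finset (Matrix (ι → ZMod 2) (ι → ZMod 2) ℂ)}
  {P Q : Matrix (ι → ZMod 2) (ι → ZMod 2) ℂ}

lemma mul_self_of_mem (hS : IsStabilizerGroup S) (hP : P ∈ S) : P * P = 1 := by
  obtain ⟨μ, a, b, hμ, rfl⟩ := hS.pauli P hP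
  set c := μ * μ * signChar (b ⬝ᵥ a)
  have hPP : μ • PauliMat a b * μ • PauliMat a b = c • 1 := by
    rw [smul_mul_smul, pauliMat_mul, ZModModule.add_self, ZModModule.add_self, pauliMat_zero,
      smul_smul]
  have hc : c * c = 1 := by
    calc c * c = (μ * μ) ^ 2 * (signChar (b ⬝ᵥ a) * signChar (b ⬝ᵥ a)) := by ring
      _ = 1 := by rcases hμ with rfl | rfl | rfl | rfl <;> simp
  rcases mul_self_eq_one_iff.mp hc with h | h
  · rw [hPP, h, one_smul]
  · exact absurd (h ▸ hPP ▸ hS.mul_mem _ hP _ hP) hS.neg_one_not_mem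

lemma isHermitian_of_mem (hS : IsStabilizerGroup S) (hP : P ∈ S) : P.IsHermitian := by
  have hunitary : Pᴴ * P = 1 := by
    obtain ⟨μ, a, b, hμ, rfl⟩ := hS.pauli P hP
    rw [conjTranspose_smul, smul_mul_smul, conjTranspose_pauliMat_mul_self]
    rcases hμ with rfl | rfl | rfl | rfl <;> simp
  calc Pᴴ = Pᴴ * (P * P) := by rw [hS.mul_self_of_mem hP, mul_one]
    _ = P := by rw [← mul_assoc, hunitary, one_mul]

lemma one_mem (hS : IsStabilizerGroup S) (hne : S.Nonempty) : 1 ∈ S := by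
  obtain ⟨P, hP⟩ := hne
  exact hS.mul_self_of_mem hP ▸ hS.mul_mem _ hP _ hP

lemma trace_mul_eq_zero_or_eq_signChar_smul (hS : IsStabilizerGroup S) {ν : ℂ} {a b : ι → ZMod 2}
    (hQ : Q = ν • PauliMat a b) (hQQ : Q * Q = 1) (hP : P ∈ S) :
    trace (Q * P) = 0 ∨ ∃ l : ZMod 2, P = signChar l • Q := by
  obtain ⟨μ, c, d, -, hPμ⟩ := hS.pauli P hP
  by_cases h : (a + c, b + d) = 0
  · obtain ⟨rfl, rfl⟩ : c = a ∧ d = b := by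
      simp only [Prod.mk_eq_zero, ← ZModModule.sub_eq_add, sub_eq_zero] at h
      exact ⟨h.1.symm, h.2.symm⟩
    have hν : ν ≠ 0 := by
      rintro rfl
      rw [hQ, zero_smul, zero_mul] at hQQ
      exact zero_ne_one hQQ
    have hPr : P = (μ / ν) • Q := by rw [hPμ, hQ, smul_smul, div_mul_cancel₀ _ hν]
    have hr : μ / ν * (μ / ν) = 1 := smul_left_injective ℂ one_ne_zero <| by
      simpa only [hPr, smul_mul_smul, hQQ, one_smul] using hS.mul_self_of_mem hP
    right
    rcases mul_self_eq_one_iff.mp hr with h1 | h1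
    · exact ⟨0, by rw [hPr, h1, AddChar.map_zero_eq_one]⟩
    · exact ⟨1, by rw [hPr, h1, signChar_one]⟩
  · left
    rw [hQ, hPμ, smul_mul_smul, pauliMat_mul, smul_smul, trace_smul, trace_pauliMat_eq_zero h,
      smul_zero]

lemma sum_trace_mul (hS : IsStabilizerGroup S) {ν : ℂ} {a b : ι → ZMod 2}
    (hQ : Q = ν • PauliMat a b) (hQQ : Q * Q = 1) :
    ∑ P ∈ S, trace (Q * P) =
      2 ^ Fintype.card ι * ∑ l ∈ Finset.univ.filter (signChar · • Q ∈ S), signChar l := by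
  have hinj : Set.InjOn (signChar · • Q) ↑(Finset.univ.filter (signChar · • Q ∈ S)) := by
    intro l _ l' _ h
    have h1 : signChar l • (1 : Matrix (ι → ZMod 2) (ι → ZMod 2) ℂ) = signChar l' • 1 := by
      simpa only [smul_mul_assoc, hQQ] using congrArg (· * Q) h
    exact signChar_injective (smul_left_injective ℂ one_ne_zero h1)
  have himage : S.filter (fun P => ∃ l : ZMod 2, P = signChar l • Q) =
      (Finset.univ.filter (signChar · • Q ∈ S)).image (signChar · • Q) := by
    ext P
    simp only [Finset.mem_filter, Finset.mem_image, Finset.mem_univ, true_and]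
    constructor
    · rintro ⟨hP, l, rfl⟩
      exact ⟨l, hP, rfl⟩
    · rintro ⟨l, hl, rfl⟩
      exact ⟨hl, l, rfl⟩
  rw [← Finset.sum_filter_of_ne fun P hP hne =>
      (hS.trace_mul_eq_zero_or_eq_signChar_smul hQ hQQ hP).resolve_left hne,
    himage, Finset.sum_image hinj, Finset.mul_sum]
  refine Finset.sum_congr rfl fun l _ => ?_
  rw [mul_smul_comm, hQQ, trace_smul, trace_one]
  simp [mul_comm]

lemma trace_sum (hS : IsStabilizerGroup S) (hne : S.Nonempty) :
    trace (∑ P ∈ S, P) = 2 ^ Fintype.card ι := by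
  have hsigns : Finset.univ.filter
      (signChar · • (1 : Matrix (ι → ZMod 2) (ι → ZMod 2) ℂ) ∈ S) = {0} := by
    ext l
    simp only [Finset.mem_filter, Finset.mem_univ, true_and, Finset.mem_singleton]
    revert l
    simpa [forall_zmod_two, hS.one_mem hne] using hS.neg_one_not_mem
  have := hS.sum_trace_mul (Q := 1) (ν := 1) (a := 0) (b := 0) (by rw [pauliMat_zero, one_smul])
    (mul_one 1)
  simpa [Matrix.trace_sum, hsigns] using this

lemma sum_mul_sum_self (hS : IsStabilizerGroup S) :
    (∑ P ∈ S, P) * (∑ P ∈ S, P) = S.card • ∑ P ∈ S, P := by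
  have hleft : ∀ P ∈ S, ∑ Q ∈ S, P * Q = ∑ Q ∈ S, Q := fun P hP =>
    Finset.sum_nbij' (P * ·) (P * ·) (fun Q hQ => hS.mul_mem P hP Q hQ)
      (fun Q hQ => hS.mul_mem P hP Q hQ)
      (fun Q _ => by simp only [← mul_assoc, hS.mul_self_of_mem hP, one_mul])
      (fun Q _ => by simp only [← mul_assoc, hS.mul_self_of_mem hP, one_mul]) (fun _ _ => rfl)
  rw [Finset.sum_mul, Finset.sum_congr rfl fun P hP => by rw [Finset.mul_sum, hleft P hP],
    Finset.sum_const]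

lemma sum_eq_smul_vecMulVec (hS : IsStabilizerGroup S) (hcard : S.card = 2 ^ Fintype.card ι)
    {ψ : (ι → ZMod 2) → ℂ} (hfix : ∀ P ∈ S, P *ᵥ ψ = ψ) (hnorm : star ψ ⬝ᵥ ψ = 1) :
    ∑ P ∈ S, P = (2 ^ Fintype.card ι : ℂ) • vecMulVec ψ (star ψ) := by
  set N : ℂ := 2 ^ Fintype.card ι
  have hN : N ≠ 0 := pow_ne_zero _ two_ne_zero
  have hcardN : (S.card : ℂ) = N := by rw [hcard]; push_cast; rfl
  have hne : S.Nonempty := Finset.card_pos.mp (by rw [hcard]; positivity)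
  suffices N⁻¹ • ∑ P ∈ S, P = vecMulVec ψ (star ψ) by
    rw [← this, smul_smul, mul_inv_cancel₀ hN, one_smul]
  apply eq_vecMulVec_of_isHermitian_of_isIdempotentElem _ _ _ _ hnorm
  · refine IsHermitian.smul ?_ (by simp [N, IsSelfAdjoint])
    simp only [IsHermitian, conjTranspose_sum]
    exact Finset.sum_congr rfl fun P hP => hS.isHermitian_of_mem hP
  · rw [IsIdempotentElem, smul_mul_smul, hS.sum_mul_sum_self, ← Nat.cast_smul_eq_nsmul ℂ, hcardN,
      smul_smul]
    field_simp
  · rw [trace_smul, hS.trace_sum hne, smul_eq_mul, inv_mul_cancel₀ hN]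
  · rw [smul_mulVec, sum_mulVec, Finset.sum_congr rfl hfix, Finset.sum_const,
      ← Nat.cast_smul_eq_nsmul ℂ, hcardN, smul_smul, inv_mul_cancel₀ hN, one_smul]

end IsStabilizerGroup

section PauliString

variable {ι : Type*} [Fintype ι]

noncomputable def pauliString (p : ι → Matrix (ZMod 2) (ZMod 2) ℂ) (f : ι → ZMod 2) :
    Matrix (ι → ZMod 2) (ι → ZMod 2) ℂ :=
  piKron fun j => p j ^ (f j).val

lemma pauliString_zero (p : ι → Matrix (ZMod 2) (ZMod 2) ℂ) : pauliString p 0 = 1 := by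
  simp only [pauliString, Pi.zero_apply, ZMod.val_zero, pow_zero, piKron_one]

lemma piKron_measurement_eq_sum [DecidableEq ι] (p : ι → Matrix (ZMod 2) (ZMod 2) ℂ)
    (y : ι → ZMod 2) :
    piKron (fun j => (2⁻¹ : ℂ) • (1 + signChar (y j) • p j)) =
      ∑ f, ((2 ^ Fintype.card ι : ℂ)⁻¹ * signChar (f ⬝ᵥ y)) • pauliString p f := by
  have hsite : ∀ j, (2⁻¹ : ℂ) • (1 + signChar (y j) • p j) =
      ∑ x : ZMod 2, ((2⁻¹ : ℂ) * signChar (x * y j)) • p j ^ x.val := by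
    intro j
    simp [sum_zmod_two, ZMod.val_one, smul_add, mul_smul]
  simp only [hsite, piKron_sum, piKron_smul, Finset.prod_mul_distrib, prod_signChar,
    Finset.prod_const, Finset.card_univ, inv_pow, dotProduct, pauliString]

variable [DecidableEq ι] {p : ι → Matrix (ZMod 2) (ZMod 2) ℂ}

lemma pauliString_mul (hp : ∀ j, IsSigma (p j)) (f g : ι → ZMod 2) :
    pauliString p f * pauliString p g = pauliString p (f + g) := by
  simp only [pauliString, piKron_mul, pow_val_mul_pow_val (hp _).mul_self, Pi.add_apply]

lemma pauliString_mul_self (hp : ∀ j, IsSigma (p j)) (f : ι → ZMod 2) :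
    pauliString p f * pauliString p f = 1 := by
  rw [pauliString_mul hp, ZModModule.add_self, pauliString_zero]

lemma trace_pauliString_eq_zero (hp : ∀ j, IsSigma (p j)) {f : ι → ZMod 2} (hf : f ≠ 0) :
    trace (pauliString p f) = 0 := by
  obtain ⟨j, hj⟩ := Function.ne_iff.mp hf
  have h1 : f j = 1 := (zmod_two_eq_zero_or_eq_one _).resolve_left hj
  rw [pauliString, trace_piKron]
  exact Finset.prod_eq_zero (Finset.mem_univ j)
    (by simpa [h1, ZMod.val_one] using (hp j).trace_eq_zero)

lemma exists_pauliString_eq_smul_pauliMat (hp : ∀ j, IsSigma (p j)) (f : ι → ZMod 2) :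
    ∃ (ν : ℂ) (a b : ι → ZMod 2), pauliString p f = ν • PauliMat a b := by
  have hsite : ∀ j, ∃ (c : ℂ) (a b : ZMod 2), p j ^ (f j).val = c • qubitPauli a b := by
    intro j
    obtain h | h := zmod_two_eq_zero_or_eq_one (f j)
    · exact ⟨1, 0, 0, by rw [h, ZMod.val_zero, pow_zero, qubitPauli_zero_zero, one_smul]⟩
    · simpa [h, ZMod.val_one] using (hp j).exists_eq_smul_qubitPauli
  choose c a b hcab using hsite
  exact ⟨∏ j, c j, a, b, by rw [pauliString, funext hcab, piKron_smul, pauliMat_eq_piKron]⟩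

lemma signChar_smul_pauliString_injective (hp : ∀ j, IsSigma (p j)) :
    Function.Injective fun x : (ι → ZMod 2) × ZMod 2 => signChar x.2 • pauliString p x.1 := by
  rintro ⟨f, l⟩ ⟨g, l'⟩ h
  have hprod : signChar l • pauliString p (f + g) = signChar l' • 1 := by
    have := congrArg (· * pauliString p g) h
    simp only [smul_mul_assoc] at this
    rwa [pauliString_mul_self hp, pauliString_mul hp] at this
  have hfg : f + g = 0 := by
    by_contra hfg
    have := congrArg trace hprod
    rw [trace_smul, trace_smul, trace_pauliString_eq_zero hp hfg, trace_one] at this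
    simp at this
  obtain rfl : f = g := by rwa [← sub_eq_zero, ZModModule.sub_eq_add]
  rw [ZModModule.add_self, pauliString_zero] at hprod
  rw [signChar_injective (smul_left_injective ℂ one_ne_zero hprod)]

end PauliString

section Measurement

variable {ι : Type*} [Fintype ι]

def parityCheck (y : ι → ZMod 2) : (ι → ZMod 2) × ZMod 2 →+ ZMod 2 :=
  AddMonoidHom.mk' (fun x => x.1 ⬝ᵥ y + x.2) fun a b => by
    simp only [Prod.fst_add, Prod.snd_add, add_dotProduct]
    abel

lemma parityCheck_apply (y : ι → ZMod 2) (x : (ι → ZMod 2) × ZMod 2) :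
    parityCheck y x = x.1 ⬝ᵥ y + x.2 := rfl

lemma parityCheck_eq_zero_iff {y : ι → ZMod 2} {x : (ι → ZMod 2) × ZMod 2} :
    parityCheck y x = 0 ↔ x.1 ⬝ᵥ y = x.2 := by
  rw [parityCheck_apply, ← ZModModule.sub_eq_add, sub_eq_zero]

variable [DecidableEq ι]

/-- The pairs `(f⁽ˢ⁾, λ_S)` of the statement, one for each element of `P ∩ S`. -/
noncomputable def signedSupport (S : Finset (Matrix (ι → ZMod 2) (ι → ZMod 2) ℂ))
    (p : ι → Matrix (ZMod 2) (ZMod 2) ℂ) : Finset ((ι → ZMod 2) × ZMod 2) :=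
  Finset.univ.filter fun x => signChar x.2 • pauliString p x.1 ∈ S

lemma filter_exists_eq_image_signedSupport (S : Finset (Matrix (ι → ZMod 2) (ι → ZMod 2) ℂ))
    (p : ι → Matrix (ZMod 2) (ZMod 2) ℂ) :
    S.filter (fun Q => ∃ f l, Q = signChar l • pauliString p f) =
      (signedSupport S p).image fun x => signChar x.2 • pauliString p x.1 := by
  ext Q
  simp only [signedSupport, Finset.mem_filter, Finset.mem_image, Finset.mem_univ, true_and,
    Prod.exists]
  constructor
  · rintro ⟨hQ, f, l, rfl⟩
    exact ⟨f, l, hQ, rfl⟩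
  · rintro ⟨f, l, hQ, rfl⟩
    exact ⟨hQ, f, l, rfl⟩

namespace IsStabilizerGroup

variable {S : Finset (Matrix (ι → ZMod 2) (ι → ZMod 2) ℂ)} {p : ι → Matrix (ZMod 2) (ZMod 2) ℂ}

lemma add_mem_signedSupport (hS : IsStabilizerGroup S) (hp : ∀ j, IsSigma (p j))
    {x x' : (ι → ZMod 2) × ZMod 2} (hx : x ∈ signedSupport S p) (hx' : x' ∈ signedSupport S p) :
    x + x' ∈ signedSupport S p := by
  simp only [signedSupport, Finset.mem_filter, Finset.mem_univ, true_and] at *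
  rw [Prod.fst_add, Prod.snd_add, AddChar.map_add_eq_mul, ← pauliString_mul hp,
    ← smul_mul_smul]
  exact hS.mul_mem _ hx _ hx'

lemma dotProduct_piKron_measurement_mulVec (hS : IsStabilizerGroup S) (hp : ∀ j, IsSigma (p j))
    (hcard : S.card = 2 ^ Fintype.card ι) {ψ : (ι → ZMod 2) → ℂ} (hfix : ∀ P ∈ S, P *ᵥ ψ = ψ)
    (hnorm : star ψ ⬝ᵥ ψ = 1) (y : ι → ZMod 2) :
    star ψ ⬝ᵥ (piKron (fun j => (2⁻¹ : ℂ) • (1 + signChar (y j) • p j)) *ᵥ ψ) =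
      (2 ^ Fintype.card ι)⁻¹ *
        ∑ x ∈ signedSupport S p, signChar.compAddMonoidHom (parityCheck y) x := by
  rw [piKron_measurement_eq_sum]
  have hN : (2 ^ Fintype.card ι : ℂ) ≠ 0 := pow_ne_zero _ two_ne_zero
  have hρ : vecMulVec ψ (star ψ) = (2 ^ Fintype.card ι : ℂ)⁻¹ • ∑ P ∈ S, P := by
    rw [hS.sum_eq_smul_vecMulVec hcard hfix hnorm, smul_smul, inv_mul_cancel₀ hN, one_smul]
  have hterm : ∀ f, trace ((((2 ^ Fintype.card ι : ℂ)⁻¹ * signChar (f ⬝ᵥ y)) • pauliString p f) *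
      ∑ P ∈ S, P) =
      ∑ l, if signChar l • pauliString p f ∈ S then
        signChar.compAddMonoidHom (parityCheck y) (f, l) else 0 := by
    intro f
    obtain ⟨ν, a, b, hf⟩ := exists_pauliString_eq_smul_pauliMat hp f
    rw [smul_mul_assoc, trace_smul, Matrix.mul_sum, Matrix.trace_sum,
      hS.sum_trace_mul hf (pauliString_mul_self hp f), smul_eq_mul, Finset.sum_filter,
      Finset.mul_sum, Finset.mul_sum]
    refine Finset.sum_congr rfl fun l _ => ?_
    split_ifs
    · rw [AddChar.compAddMonoidHom_apply, parityCheck_apply, AddChar.map_add_eq_mul]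
      field_simp
    · simp
  rw [dotProduct_comm, ← trace_vecMulVec, ← mul_vecMulVec, hρ, mul_smul_comm, trace_smul,
    smul_eq_mul, Finset.sum_mul, Matrix.trace_sum, Finset.sum_congr rfl fun f _ => hterm f,
    signedSupport, Finset.sum_filter, Fintype.sum_prod_type]

end IsStabilizerGroup

end Measurement

theorem stabilizer_submeasurement_probabilities (n : ℕ)
    (ψ : (Fin n → ZMod 2) → ℂ)
    (hnorm : ∑ s, ψ s * star (ψ s) = 1)
    (S : Finset (Matrix (Fin n → ZMod 2) (Fin n → ZMod 2) ℂ))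
    (hcard : S.card = 2 ^ n)
    (hpauli : ∀ P ∈ S, ∃ (μ : ℂ) (a b : Fin n → ZMod 2),
      (μ = 1 ∨ μ = -1 ∨ μ = Complex.I ∨ μ = -Complex.I) ∧ P = μ • PauliMat a b)
    (hgroup : ∀ P ∈ S, ∀ Q ∈ S, P * Q ∈ S)
    (hnoneg : (-1 : ℂ) • (1 : Matrix (Fin n → ZMod 2) (Fin n → ZMod 2) ℂ) ∉ S)
    (hfix : ∀ P ∈ S, P.mulVec ψ = ψ)
    -- the measured full-support Pauli string: a single-qubit Pauli on every site
    (p : Fin n → Matrix (ZMod 2) (ZMod 2) ℂ)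
    (hp : ∀ j, p j = sigmaX ∨ p j = sigmaY ∨ p j = sigmaZ)
    -- the observed outcome string
    (y : Fin n → ZMod 2)
    -- `Emb f` is the sub-string of `P` supported on `f`, tensored with identities
    (Emb : (Fin n → ZMod 2) → Matrix (Fin n → ZMod 2) (Fin n → ZMod 2) ℂ)
    (hEmb : ∀ f, Emb f =
      Matrix.of fun s t => ∏ j, ((p j) ^ (f j).val) (s j) (t j))
    -- the projector onto the joint outcome `y` of the local measurements of the `P_j`
    (Proj : Matrix (Fin n → ZMod 2) (Fin n → ZMod 2) ℂ)
    (hProj : Proj = Matrix.of fun s t =>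
      ∏ j, ((2⁻¹ : ℂ) • ((1 : Matrix (ZMod 2) (ZMod 2) ℂ) +
        ((-1 : ℂ) ^ (y j).val) • p j)) (s j) (t j))
    -- the probability of the outcome `y`
    (Pr : ℂ) (hPr : Pr = ∑ s, star (ψ s) * (Proj.mulVec ψ) s)
    -- `T = P ∩ S`, the stabilizer submeasurements of `P`
    (T : Finset (Matrix (Fin n → ZMod 2) (Fin n → ZMod 2) ℂ))
    (hT : T = S.filter fun Q => ∃ (f : Fin n → ZMod 2) (lam : ZMod 2),
      Q = ((-1 : ℂ) ^ lam.val) • Emb f) :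
    ((∀ Q ∈ T, ∀ (f : Fin n → ZMod 2) (lam : ZMod 2),
        Q = ((-1 : ℂ) ^ lam.val) • Emb f → (∑ j, f j * y j) = lam) →
      Pr = (T.card : ℂ) / 2 ^ n) ∧
    ((¬ ∀ Q ∈ T, ∀ (f : Fin n → ZMod 2) (lam : ZMod 2),
        Q = ((-1 : ℂ) ^ lam.val) • Emb f → (∑ j, f j * y j) = lam) →
      Pr = 0) := by
  have hS : IsStabilizerGroup S := ⟨hpauli, hgroup, hnoneg⟩
  obtain rfl : Emb = pauliString p := funext fun f => (hEmb f).trans rfl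
  simp only [← signChar_apply] at hProj hT ⊢
  set H := signedSupport S p
  have hTH : T = H.image fun x => signChar x.2 • pauliString p x.1 :=
    hT.trans (filter_exists_eq_image_signedSupport S p)
  have hcond : (∀ Q ∈ T, ∀ f l, Q = signChar l • pauliString p f → ∑ j, f j * y j = l) ↔
      ∀ x ∈ H, signChar.compAddMonoidHom (parityCheck y) x = 1 := by
    simp only [AddChar.compAddMonoidHom_apply, signChar_eq_one_iff, parityCheck_eq_zero_iff, hTH,
      Finset.mem_image]
    constructor
    · exact fun h x hx => h _ ⟨x, hx, rfl⟩ x.1 x.2 rfl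
    · rintro h Q ⟨x, hx, rfl⟩ f l hQ
      obtain rfl : x = (f, l) := signChar_smul_pauliString_injective hp (a₁ := x) (a₂ := (f, l)) hQ
      exact h _ hx
  have hPr' : Pr = (2 ^ n)⁻¹ * ∑ x ∈ H, signChar.compAddMonoidHom (parityCheck y) x := by
    have := hS.dotProduct_piKron_measurement_mulVec hp (by rwa [Fintype.card_fin]) hfix
      (by rwa [dotProduct_comm]) y
    rw [hPr, hProj]
    rwa [Fintype.card_fin] at this
  have hcardT : T.card = H.card := by
    rw [hTH, Finset.card_image_of_injective _ (signChar_smul_pauliString_injective hp)]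
  rw [hPr', AddChar.sum_finset_eq_ite _ (fun x hx x' hx' => hS.add_mem_signedSupport hp hx hx')
    (fun x hx => by rwa [ZModModule.neg_eq_self]), hcardT]
  split_ifs with h
  · exact ⟨fun _ => inv_mul_eq_div _ _, fun h' => absurd (hcond.mpr h) h'⟩
  · exact ⟨fun h' => absurd (hcond.mp h') h, fun _ => mul_zero _⟩
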